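/- arXiv:2007.10930 — 3 statements merged into one kernel-verified Lean document; each statement's English description precedes it below -/
import Mathlib

section
/- Let A ∈ R^{D×D} be a matrix with |det A| = 1 such that every column of A has ℓα quasi-norm equal to 1 for some fixed α with 0 < α < 2. Then A is a signed permutation matrix, i.e., each column has exactly one nonzero entry, which equals 1 or -1. -/
open Real Finset

/-! The entries of a column `a` with `‖a‖_α = 1` lie in `[-1, 1]`, where `x² ≤ |x|^α`; hence
`‖a‖₂ ≤ 1`. Hadamard's inequality `1 = |det A| ≤ ∏ⱼ ‖aⱼ‖₂` then forces `‖aⱼ‖₂ = 1` for every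
column, i.e. `x² = |x|^α` for every entry. For `α < 2` this only happens at `|x| ∈ {0, 1}`, and
`∑ᵢ aᵢ² = 1` leaves room for exactly one entry `±1`. -/

theorem Matrix.abs_det_le_prod_sqrt_sum_sq {n : ℕ} (A : Matrix (Fin n) (Fin n) ℝ) :
    |A.det| ≤ ∏ j, √(∑ i, A i j ^ 2) := by
  have : Fact (Module.finrank ℝ (EuclideanSpace ℝ (Fin n)) = n) := ⟨finrank_euclideanSpace_fin⟩
  let b := EuclideanSpace.basisFun (Fin n) ℝ
  let col : Fin n → EuclideanSpace ℝ (Fin n) := fun j => WithLp.toLp 2 fun i => A i j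
  have hdet : b.toBasis.det col = A.det := by rw [Module.Basis.det_apply]; rfl
  have hnorm : ∀ j, ‖col j‖ = √(∑ i, A i j ^ 2) := fun j => by
    simp [col, EuclideanSpace.norm_eq]
  calc |A.det| = |b.toBasis.orientation.volumeForm col| := by
        rw [b.toBasis.orientation.volumeForm_robust' b, hdet]
    _ ≤ ∏ j, ‖col j‖ := b.toBasis.orientation.abs_volumeForm_apply_le col
    _ = ∏ j, √(∑ i, A i j ^ 2) := by simp only [hnorm]

theorem Finset.eq_one_of_one_le_prod_of_le_one {ι : Type*} [Fintype ι] {f : ι → ℝ}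
    (hf0 : ∀ i, 0 ≤ f i) (hf1 : ∀ i, f i ≤ 1) (hprod : 1 ≤ ∏ i, f i) (j : ι) : f j = 1 := by
  refine le_antisymm (hf1 j) ?_
  calc 1 ≤ ∏ i, f i := hprod
    _ ≤ ∏ i ∈ {j}, f i :=
      prod_le_prod_of_subset_of_le_one (subset_univ _) (fun i _ => hf0 i) (fun i _ _ => hf1 i)
    _ = f j := prod_singleton f j

theorem sq_le_abs_rpow_of_abs_le_one {x α : ℝ} (hα : α ≤ 2) (hx : |x| ≤ 1) : x ^ 2 ≤ |x| ^ α := by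
  rcases (abs_nonneg x).eq_or_lt with hx0 | hx0
  · rw [← sq_abs, ← hx0, sq, zero_mul]
    exact zero_rpow_nonneg α
  · calc x ^ 2 = |x| ^ (2 : ℝ) := by rw [rpow_two, sq_abs]
      _ ≤ |x| ^ α := rpow_le_rpow_of_exponent_ge hx0 hx hα

theorem eq_zero_or_abs_eq_one_of_sq_eq_abs_rpow {x α : ℝ} (hα2 : α < 2)
    (hx : |x| ≤ 1) (h : x ^ 2 = |x| ^ α) : x = 0 ∨ |x| = 1 := by
  by_contra! hne
  have hlt : |x| ^ (2 : ℝ) < |x| ^ α :=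
    rpow_lt_rpow_of_exponent_gt (abs_pos.2 hne.1) (hx.lt_of_ne hne.2) hα2
  rw [rpow_two, sq_abs, h] at hlt
  exact lt_irrefl _ hlt

section SumRpowEqOne

variable {ι : Type*} [Fintype ι] {v : ι → ℝ} {α : ℝ}

theorem sum_abs_rpow_eq_one_of_rpow_inv_eq_one (hα : α ≠ 0)
    (h : (∑ i, |v i| ^ α) ^ (1 / α) = 1) : ∑ i, |v i| ^ α = 1 := by
  rwa [one_div, rpow_inv_eq (sum_nonneg fun i _ => rpow_nonneg (abs_nonneg _) _) zero_le_one hα,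
    one_rpow] at h

theorem abs_le_one_of_sum_abs_rpow_eq_one (hα0 : 0 < α) (h : ∑ i, |v i| ^ α = 1) (i : ι) :
    |v i| ≤ 1 := by
  have hle : |v i| ^ α ≤ 1 :=
    h ▸ single_le_sum (f := fun k => |v k| ^ α) (fun k _ => rpow_nonneg (abs_nonneg _) _)
      (mem_univ i)
  exact le_of_not_gt fun hgt => (one_lt_rpow hgt hα0).not_ge hle

theorem sum_sq_le_one_of_sum_abs_rpow_eq_one (hα0 : 0 < α) (hα2 : α ≤ 2)
    (h : ∑ i, |v i| ^ α = 1) : ∑ i, v i ^ 2 ≤ 1 :=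
  h ▸ sum_le_sum fun i _ =>
    sq_le_abs_rpow_of_abs_le_one hα2 (abs_le_one_of_sum_abs_rpow_eq_one hα0 h i)

theorem exists_eq_one_or_eq_neg_one_of_sum_abs_rpow_eq_one_of_sum_sq_eq_one
    (hα0 : 0 < α) (hα2 : α < 2) (hα : ∑ i, |v i| ^ α = 1) (h2 : ∑ i, v i ^ 2 = 1) :
    ∃ i, (v i = 1 ∨ v i = -1) ∧ ∀ i' ≠ i, v i' = 0 := by
  have hle : ∀ i, |v i| ≤ 1 := abs_le_one_of_sum_abs_rpow_eq_one hα0 hα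
  have hgap : ∀ i, 0 ≤ |v i| ^ α - v i ^ 2 := fun i =>
    sub_nonneg.2 (sq_le_abs_rpow_of_abs_le_one hα2.le (hle i))
  have hgap_sum : ∑ i, (|v i| ^ α - v i ^ 2) = 0 := by rw [sum_sub_distrib, hα, h2, sub_self]
  have hsq_eq : ∀ i, v i ^ 2 = |v i| ^ α := fun i =>
    (sub_eq_zero.1 <| (sum_eq_zero_iff_of_nonneg fun i _ => hgap i).1 hgap_sum i (mem_univ i)).symm
  obtain ⟨i, hi⟩ : ∃ i, v i ≠ 0 := by
    by_contra! hzero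
    simp [hzero] at h2
  have habs : |v i| = 1 :=
    (eq_zero_or_abs_eq_one_of_sq_eq_abs_rpow hα2 (hle i) (hsq_eq i)).resolve_left hi
  refine ⟨i, abs_eq zero_le_one |>.1 habs, fun i' hi' => ?_⟩
  classical
  have hrest : ∑ k ∈ univ.erase i, v k ^ 2 = 0 := by
    rw [← add_sum_erase _ _ (mem_univ i), ← sq_abs, habs, one_pow] at h2
    linarith
  exact pow_eq_zero_iff two_ne_zero |>.1 <| (sum_eq_zero_iff_of_nonneg fun k _ => sq_nonneg _).1
    hrest i' (mem_erase.2 ⟨hi', mem_univ _⟩)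

end SumRpowEqOne

/-- A matrix with `|det A| = 1` whose columns all have ℓα quasi-norm 1 for some `0 < α < 2`
is a signed permutation matrix: each column has exactly one nonzero entry, equal to `±1`. -/
theorem signed_perm_of_det_one_columns_alpha_norm_one (D : ℕ) (A : Matrix (Fin D) (Fin D) ℝ)
    (α : ℝ) (hα0 : 0 < α) (hα2 : α < 2)
    (hdet : |A.det| = 1)
    (hcol : ∀ j, (∑ i, |A i j| ^ α) ^ (1 / α) = 1) :
    ∀ j, ∃ i, (A i j = 1 ∨ A i j = -1) ∧ ∀ i', i' ≠ i → A i' j = 0 := by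
  have hsum : ∀ j, ∑ i, |A i j| ^ α = 1 := fun j =>
    sum_abs_rpow_eq_one_of_rpow_inv_eq_one hα0.ne' (hcol j)
  have hnorm_le : ∀ j, √(∑ i, A i j ^ 2) ≤ 1 := fun j =>
    sqrt_le_one.2 (sum_sq_le_one_of_sum_abs_rpow_eq_one hα0 hα2.le (hsum j))
  have hnorm : ∀ j, √(∑ i, A i j ^ 2) = 1 :=
    eq_one_of_one_le_prod_of_le_one (fun _ => sqrt_nonneg _) hnorm_le
      (hdet ▸ A.abs_det_le_prod_sqrt_sum_sq)
  exact fun j => exists_eq_one_or_eq_neg_one_of_sum_abs_rpow_eq_one_of_sum_sq_eq_one hα0 hα2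
    (hsum j) (sqrt_eq_one.1 (hnorm j))
end

section
/- For the generalized Laplace distribution with density p(z) ∝ exp(−λ|z|^α), the n-th absolute moment is E[|Z|^n] = λ^{−n/α}·Γ((n+1)/α)/Γ(1/α). In particular its excess kurtosis Γ(5/α)Γ(1/α)/Γ(3/α)² − 3 is strictly positive for α < 2, zero for α = 2, and strictly negative for α > 2. -/
/-!
Substituting `x = |z|` reduces the absolute moments to the integral
`∫₀^∞ x^q e^{-λ x^α} dx = λ^{-(q+1)/α} Γ((q+1)/α) / α`.

For the kurtosis put `t = 1/α` and `K t = Γ(5t)Γ(t)/Γ(3t)²`, so that the excess kurtosis is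
`K t - 3` and `K (1/2) = 3` because `Γ(1/2) = √π`. Euler's limit formula writes `K t` as the
infinite product `∏_{j ≥ 0} (3t+j)² / ((5t+j)(t+j))`, whose `j = 0` factor is `9/5` and whose
other factors are strictly increasing in `t`; hence `K` is strictly increasing, which gives the
sign of `K (1/α) - 3` according to the position of `α` relative to `2`.
-/

open Real MeasureTheory Filter Topology Finset

noncomputable def generalizedLaplaceDensity (α lam z : ℝ) : ℝ :=
  α * lam ^ (1 / α) / (2 * Gamma (1 / α)) * exp (-lam * |z| ^ α)

theorem integral_abs_rpow_mul_exp_neg_mul_abs_rpow {p q b : ℝ} (hp : 0 < p) (hq : -1 < q)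
    (hb : 0 < b) :
    ∫ z : ℝ, |z| ^ q * exp (-b * |z| ^ p) =
      2 * (b ^ (-(q + 1) / p) * (1 / p) * Gamma ((q + 1) / p)) := by
  rw [integral_comp_abs (f := fun x => x ^ q * exp (-b * x ^ p)),
    integral_rpow_mul_exp_neg_mul_rpow hp hq hb]

theorem integral_abs_rpow_mul_generalizedLaplaceDensity {α lam q : ℝ} (hα : 0 < α)
    (hlam : 0 < lam) (hq : -1 < q) :
    ∫ z : ℝ, |z| ^ q * generalizedLaplaceDensity α lam z =
      lam ^ (-q / α) * Gamma ((q + 1) / α) / Gamma (1 / α) := by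
  simp only [generalizedLaplaceDensity, mul_left_comm _ (α * _ / _), integral_const_mul,
    integral_abs_rpow_mul_exp_neg_mul_abs_rpow hα hq hlam]
  have hpow : lam ^ (1 / α) * lam ^ (-(q + 1) / α) = lam ^ (-q / α) := by
    rw [← rpow_add hlam]; ring_nf
  have hΓ : Gamma (1 / α) ≠ 0 := (Gamma_pos_of_pos (by positivity)).ne'
  rw [← hpow]
  field_simp

theorem GammaSeq_mul_GammaSeq_div_GammaSeq_sq {a b c : ℝ} (ha : 0 < a) (hb : 0 < b)
    (habc : a + b = 2 * c) {n : ℕ} (hn : n ≠ 0) :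
    GammaSeq a n * GammaSeq b n / GammaSeq c n ^ 2 =
      ∏ j ∈ range (n + 1), (c + j) ^ 2 / ((a + j) * (b + j)) := by
  have hc : 0 < c := by linarith
  have hn : (0 : ℝ) < n := by positivity
  have hpow : (n : ℝ) ^ a * (n : ℝ) ^ b = ((n : ℝ) ^ c) ^ 2 := by
    rw [← rpow_add hn, ← rpow_natCast, ← rpow_mul hn.le, habc]; ring_nf
  have hA : ∏ j ∈ range (n + 1), (a + j) ≠ 0 := prod_ne_zero_iff.mpr fun j _ => by positivity
  have hB : ∏ j ∈ range (n + 1), (b + j) ≠ 0 := prod_ne_zero_iff.mpr fun j _ => by positivity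
  have hC : ∏ j ∈ range (n + 1), (c + j) ≠ 0 := prod_ne_zero_iff.mpr fun j _ => by positivity
  simp only [GammaSeq, prod_div_distrib, Finset.prod_pow, prod_mul_distrib]
  field_simp
  exact hpow

theorem tendsto_prod_div_Gamma_mul_Gamma_div_Gamma_sq {a b c : ℝ} (ha : 0 < a) (hb : 0 < b)
    (habc : a + b = 2 * c) :
    Tendsto (fun n : ℕ => ∏ j ∈ range (n + 1), (c + j) ^ 2 / ((a + j) * (b + j))) atTop
      (𝓝 (Gamma a * Gamma b / Gamma c ^ 2)) := by
  have hΓ : Gamma c ^ 2 ≠ 0 := pow_ne_zero 2 (Gamma_pos_of_pos (by linarith)).ne'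
  refine (((GammaSeq_tendsto_Gamma a).mul (GammaSeq_tendsto_Gamma b)).div
    ((GammaSeq_tendsto_Gamma c).pow 2) hΓ).congr' ?_
  filter_upwards [eventually_ne_atTop 0] with n hn
  exact GammaSeq_mul_GammaSeq_div_GammaSeq_sq ha hb habc hn

noncomputable def kurtosisGammaRatio (t : ℝ) : ℝ := Gamma (5 * t) * Gamma t / Gamma (3 * t) ^ 2

noncomputable def kurtosisFactor (t x : ℝ) : ℝ := (3 * t + x) ^ 2 / ((5 * t + x) * (t + x))

theorem kurtosisFactor_pos {t x : ℝ} (ht : 0 < t) (hx : 0 ≤ x) : 0 < kurtosisFactor t x := by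
  unfold kurtosisFactor; positivity

theorem kurtosisFactor_zero {t : ℝ} (ht : t ≠ 0) : kurtosisFactor t 0 = 9 / 5 := by
  rw [kurtosisFactor, div_eq_iff (by simp [ht])]
  ring

theorem kurtosisFactor_lt_kurtosisFactor {t₁ t₂ x : ℝ} (ht₁ : 0 < t₁) (h : t₁ < t₂)
    (hx : 0 < x) : kurtosisFactor t₁ x < kurtosisFactor t₂ x := by
  have ht₂ : 0 < t₂ := ht₁.trans h
  unfold kurtosisFactor
  rw [div_lt_div_iff₀ (by positivity) (by positivity)]
  nlinarith [mul_pos (mul_pos hx hx) (mul_pos (add_pos ht₁ ht₂) (sub_pos.mpr h)),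
    mul_pos (mul_pos (mul_pos ht₁ ht₂) hx) (sub_pos.mpr h)]

theorem tendsto_prod_kurtosisFactor {t : ℝ} (ht : 0 < t) :
    Tendsto (fun n : ℕ => ∏ j ∈ range (n + 1), kurtosisFactor t j) atTop
      (𝓝 (kurtosisGammaRatio t)) :=
  tendsto_prod_div_Gamma_mul_Gamma_div_Gamma_sq (by positivity) ht (by ring)

theorem kurtosisGammaRatio_pos {t : ℝ} (ht : 0 < t) : 0 < kurtosisGammaRatio t := by
  have := Gamma_pos_of_pos (by positivity : 0 < 5 * t)
  have := Gamma_pos_of_pos (by positivity : 0 < 3 * t)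
  have := Gamma_pos_of_pos ht
  unfold kurtosisGammaRatio; positivity

theorem strictMonoOn_kurtosisGammaRatio : StrictMonoOn kurtosisGammaRatio (Set.Ioi 0) := by
  intro t₁ (ht₁ : 0 < t₁) t₂ (ht₂ : 0 < t₂) h
  -- The partial products of the factor ratios increase, and already exceed `1` at `n = 1`,
  -- so strictness survives the limit.
  set r : ℕ → ℝ := fun n =>
    ∏ j ∈ range (n + 1), kurtosisFactor t₂ j / kurtosisFactor t₁ j
  have one_le_factor (j : ℕ) : 1 ≤ kurtosisFactor t₂ j / kurtosisFactor t₁ j := by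
    rw [one_le_div (kurtosisFactor_pos ht₁ j.cast_nonneg)]
    rcases j.eq_zero_or_pos with rfl | hj
    · simp [kurtosisFactor_zero ht₁.ne', kurtosisFactor_zero ht₂.ne']
    · exact (kurtosisFactor_lt_kurtosisFactor ht₁ h (by positivity)).le
  have hr_mono : Monotone r := monotone_nat_of_le_succ fun n => by
    simp only [r, prod_range_succ _ (n + 1)]
    exact le_mul_of_one_le_right (prod_nonneg fun j _ => zero_le_one.trans (one_le_factor j))
      (one_le_factor _)
  have hr_tendsto : Tendsto r atTop (𝓝 (kurtosisGammaRatio t₂ / kurtosisGammaRatio t₁)) := by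
    simp only [r, prod_div_distrib]
    exact (tendsto_prod_kurtosisFactor ht₂).div (tendsto_prod_kurtosisFactor ht₁)
      (kurtosisGammaRatio_pos ht₁).ne'
  have hr_one : 1 < r 1 := by
    simp only [r, prod_range_succ, prod_range_zero, one_mul, Nat.cast_zero, Nat.cast_one,
      kurtosisFactor_zero ht₁.ne', kurtosisFactor_zero ht₂.ne']
    rw [div_self (by norm_num), one_mul, one_lt_div (kurtosisFactor_pos ht₁ zero_le_one)]
    exact kurtosisFactor_lt_kurtosisFactor ht₁ h one_pos
  exact (one_lt_div (kurtosisGammaRatio_pos ht₁)).mp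
    (hr_one.trans_le (hr_mono.ge_of_tendsto hr_tendsto 1))

theorem kurtosisGammaRatio_one_half : kurtosisGammaRatio (1 / 2) = 3 := by
  have h₁ : Gamma (1 / 2) = √π := Gamma_one_half_eq
  have h₃ : Gamma (3 * (1 / 2)) = 1 / 2 * √π := by
    rw [show (3 * (1 / 2) : ℝ) = 1 / 2 + 1 by norm_num, Gamma_add_one (by norm_num), h₁]
  have h₅ : Gamma (5 * (1 / 2)) = 3 / 2 * (1 / 2 * √π) := by
    rw [show (5 * (1 / 2) : ℝ) = 3 * (1 / 2) + 1 by norm_num, Gamma_add_one (by norm_num), h₃]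
    norm_num
  have hπ : √π ≠ 0 := (sqrt_pos.mpr pi_pos).ne'
  rw [kurtosisGammaRatio, h₁, h₃, h₅]
  field_simp

/-- Absolute moments of the generalized Laplace distribution:
`E[|Z|^n] = λ^{−n/α}·Γ((n+1)/α)/Γ(1/α)`, and its excess kurtosis
`Γ(5/α)Γ(1/α)/Γ(3/α)² − 3` is positive for `α < 2`, zero for `α = 2`,
negative for `α > 2`. -/
theorem generalized_laplace_moments_and_kurtosis (α lam : ℝ) (hα : 0 < α) (hlam : 0 < lam) :
    (∀ n : ℕ, ∫ z : ℝ, |z| ^ (n : ℝ) *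
        ((α * lam ^ ((1 : ℝ) / α) / (2 * Real.Gamma (1 / α))) * Real.exp (-lam * |z| ^ α)) =
      lam ^ (-(n : ℝ) / α) * Real.Gamma (((n : ℝ) + 1) / α) / Real.Gamma (1 / α)) ∧
    (α < 2 → 0 < Real.Gamma (5 / α) * Real.Gamma (1 / α) / (Real.Gamma (3 / α)) ^ 2 - 3) ∧
    (α = 2 → Real.Gamma (5 / α) * Real.Gamma (1 / α) / (Real.Gamma (3 / α)) ^ 2 - 3 = 0) ∧
    (2 < α → Real.Gamma (5 / α) * Real.Gamma (1 / α) / (Real.Gamma (3 / α)) ^ 2 - 3 < 0) := by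
  have hK : Gamma (5 / α) * Gamma (1 / α) / Gamma (3 / α) ^ 2 = kurtosisGammaRatio (1 / α) := by
    simp only [kurtosisGammaRatio, mul_one_div]
  have h_half : (1 / 2 : ℝ) ∈ Set.Ioi 0 := by norm_num
  have h_inv : 1 / α ∈ Set.Ioi 0 := one_div_pos.mpr hα
  rw [hK]
  refine ⟨fun n => integral_abs_rpow_mul_generalizedLaplaceDensity hα hlam
    (by linarith [n.cast_nonneg (α := ℝ)]), fun h => ?_, fun h => ?_, fun h => ?_⟩
  · linarith [kurtosisGammaRatio_one_half,
      strictMonoOn_kurtosisGammaRatio h_half h_inv (one_div_lt_one_div_of_lt hα h)]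
  · rw [h, kurtosisGammaRatio_one_half, sub_self]
  · linarith [kurtosisGammaRatio_one_half,
      strictMonoOn_kurtosisGammaRatio h_inv h_half (one_div_lt_one_div_of_lt two_pos h)]
end

section
/- For a random variable X with density p(x) ∝ exp(−λ|x|^α) with 0 < α < 2 and λ > 0, the excess kurtosis E[X⁴]/(E[X²])² − 3 = Γ(5/α)·Γ(1/α)/Γ(3/α)² − 3 is a strictly decreasing function of α on (0, 2), tending to +∞ as α → 0⁺ and to 0 as α → 2⁻. -/
/-!
With `t = 1/α`, the kurtosis ratio is `Γ(5t)Γ(t)/Γ(3t)²`. Since `5t + t = 2·(3t)`, the powers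
`n^s` cancel in Euler's limit `Γ(s) = lim n^s n!/(s(s+1)⋯(s+n))`, so the ratio is the infinite
product of the factors `(3t+j)²/((5t+j)(t+j))`. Each factor is `≥ 1` and nondecreasing in `t`,
and the factor `j = 1` is strictly increasing, which gives strict monotonicity in `t`. For
`j ≤ t` a factor is at least `4/3`, so the ratio is at least `(4/3)^⌊t⌋` and tends to `∞` as
`t → ∞`. At `α = 2` the ratio is `3` by the recurrence `Γ(s+1) = sΓ(s)`.
-/

open Real Filter Finset Topology

lemma prod_range_add_pos {x : ℝ} (hx : 0 < x) (n : ℕ) : 0 < ∏ j ∈ range (n + 1), (x + j) :=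
  prod_pos fun j _ => by positivity

lemma GammaSeq_mul_GammaSeq_div_sq {a b c : ℝ} (ha : 0 < a) (hb : 0 < b) (hc : 0 < c)
    (habc : a + b = 2 * c) {n : ℕ} (hn : n ≠ 0) :
    GammaSeq a n * GammaSeq b n / GammaSeq c n ^ 2 =
      ∏ j ∈ range (n + 1), (c + j) ^ 2 / ((a + j) * (b + j)) := by
  have hn0 : (0 : ℝ) < n := by exact_mod_cast Nat.pos_of_ne_zero hn
  have hA := prod_range_add_pos ha n
  have hB := prod_range_add_pos hb n
  have hC := prod_range_add_pos hc n
  have hpow : (n : ℝ) ^ a * (n : ℝ) ^ b = ((n : ℝ) ^ c) ^ 2 := by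
    rw [← rpow_add hn0, habc, ← rpow_natCast, ← rpow_mul hn0.le]
    ring_nf
  rw [GammaSeq, GammaSeq, GammaSeq, prod_div_distrib, prod_mul_distrib, prod_pow]
  field_simp
  exact hpow

lemma tendsto_prod_Gamma_mul_Gamma_div_sq {a b c : ℝ} (ha : 0 < a) (hb : 0 < b) (hc : 0 < c)
    (habc : a + b = 2 * c) :
    Tendsto (fun n : ℕ => ∏ j ∈ range (n + 1), (c + j) ^ 2 / ((a + j) * (b + j))) atTop
      (𝓝 (Gamma a * Gamma b / Gamma c ^ 2)) := by
  have hGc : Gamma c ^ 2 ≠ 0 := pow_ne_zero _ (Gamma_pos_of_pos hc).ne'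
  refine (((GammaSeq_tendsto_Gamma a).mul (GammaSeq_tendsto_Gamma b)).div
    ((GammaSeq_tendsto_Gamma c).pow 2) hGc).congr' ?_
  filter_upwards [eventually_ne_atTop 0] with n hn
  exact GammaSeq_mul_GammaSeq_div_sq ha hb hc habc hn

lemma Finset.mul_prod_le_mul_prod {ι : Type*} [DecidableEq ι] {s : Finset ι} {f g : ι → ℝ}
    {i : ι} (hi : i ∈ s) (hf : ∀ j ∈ s, 0 ≤ f j) (hfg : ∀ j ∈ s, f j ≤ g j) :
    g i * ∏ j ∈ s, f j ≤ f i * ∏ j ∈ s, g j := by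
  rw [← mul_prod_erase s f hi, ← mul_prod_erase s g hi, mul_left_comm]
  have hgi := (hf i hi).trans (hfg i hi)
  exact mul_le_mul_of_nonneg_left (mul_le_mul_of_nonneg_left (prod_le_prod
    (fun j hj => hf j (mem_of_mem_erase hj)) fun j hj => hfg j (mem_of_mem_erase hj)) hgi)
    (hf i hi)

namespace GeneralizedLaplace

/-- The ratio `E[X⁴]/(E[X²])²` as a function of `t = 1/α`. -/
noncomputable def kurtosisRatio (t : ℝ) : ℝ := Gamma (5 * t) * Gamma t / Gamma (3 * t) ^ 2

noncomputable def kurtosisFactor (t : ℝ) (j : ℕ) : ℝ :=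
  (3 * t + j) ^ 2 / ((5 * t + j) * (t + j))

noncomputable def kurtosisPartialProd (t : ℝ) (n : ℕ) : ℝ :=
  ∏ j ∈ range (n + 1), kurtosisFactor t j

variable {s t : ℝ}

lemma kurtosisFactor_pos (ht : 0 < t) (j : ℕ) : 0 < kurtosisFactor t j := by
  unfold kurtosisFactor; positivity

lemma one_le_kurtosisFactor (ht : 0 < t) (j : ℕ) : 1 ≤ kurtosisFactor t j := by
  rw [kurtosisFactor, one_le_div (by positivity)]
  nlinarith [sq_nonneg t, j.cast_nonneg (α := ℝ)]

lemma four_thirds_le_kurtosisFactor (ht : 0 < t) {j : ℕ} (hj : (j : ℝ) ≤ t) :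
    4 / 3 ≤ kurtosisFactor t j := by
  rw [kurtosisFactor, le_div_iff₀ (by positivity)]
  nlinarith [mul_nonneg (by positivity : (0 : ℝ) ≤ 7 * t + j) (sub_nonneg.2 hj)]

lemma kurtosisFactor_mono (hs : 0 < s) (hst : s ≤ t) (j : ℕ) :
    kurtosisFactor s j ≤ kurtosisFactor t j := by
  have hj := j.cast_nonneg (α := ℝ)
  have ht : 0 < t := hs.trans_le hst
  rw [kurtosisFactor, kurtosisFactor, div_le_div_iff₀ (by positivity) (by positivity)]
  nlinarith [mul_nonneg (mul_nonneg (mul_nonneg hj hs.le) ht.le) (sub_nonneg.2 hst),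
    mul_nonneg (mul_nonneg (mul_nonneg hj hj) (sub_nonneg.2 hst)) (by linarith : 0 ≤ s + t)]

lemma kurtosisFactor_one_strictMono (hs : 0 < s) (hst : s < t) :
    kurtosisFactor s 1 < kurtosisFactor t 1 := by
  have ht : 0 < t := hs.trans hst
  rw [kurtosisFactor, kurtosisFactor, div_lt_div_iff₀ (by positivity) (by positivity)]
  push_cast
  nlinarith [mul_pos (mul_pos hs ht) (sub_pos.2 hst)]

lemma kurtosisRatio_pos (ht : 0 < t) : 0 < kurtosisRatio t := by
  have := Gamma_pos_of_pos (by positivity : 0 < 5 * t)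
  have := Gamma_pos_of_pos ht
  unfold kurtosisRatio; positivity

lemma tendsto_kurtosisPartialProd (ht : 0 < t) :
    Tendsto (kurtosisPartialProd t) atTop (𝓝 (kurtosisRatio t)) :=
  tendsto_prod_Gamma_mul_Gamma_div_sq (by positivity) ht (by positivity) (by ring)

lemma monotone_kurtosisPartialProd (ht : 0 < t) : Monotone (kurtosisPartialProd t) :=
  fun _ _ hmn => prod_le_prod_of_subset_of_one_le (range_subset_range.2 (by omega))
    (fun j _ => (kurtosisFactor_pos ht j).le) fun j _ _ => one_le_kurtosisFactor ht j

lemma kurtosisPartialProd_le_kurtosisRatio (ht : 0 < t) (n : ℕ) :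
    kurtosisPartialProd t n ≤ kurtosisRatio t :=
  (monotone_kurtosisPartialProd ht).ge_of_tendsto (tendsto_kurtosisPartialProd ht) n

lemma strictMonoOn_kurtosisRatio : StrictMonoOn kurtosisRatio (Set.Ioi 0) := by
  intro s (hs : 0 < s) t (ht : 0 < t) hst
  -- Comparing only the `j = 1` factors gives a non-strict inequality, which survives the limit.
  have hcross : kurtosisFactor t 1 * kurtosisRatio s ≤ kurtosisFactor s 1 * kurtosisRatio t := by
    refine le_of_tendsto_of_tendsto ((tendsto_kurtosisPartialProd hs).const_mul _)
      ((tendsto_kurtosisPartialProd ht).const_mul _) ?_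
    filter_upwards [eventually_ge_atTop 1] with n hn
    exact mul_prod_le_mul_prod (mem_range.2 (by omega))
      (fun j _ => (kurtosisFactor_pos hs j).le) fun j _ => kurtosisFactor_mono hs hst.le j
  have h1 := kurtosisFactor_one_strictMono hs hst
  have := kurtosisRatio_pos hs
  have := kurtosisFactor_pos hs 1
  nlinarith

lemma tendsto_kurtosisRatio_atTop : Tendsto kurtosisRatio atTop atTop := by
  have hpow : Tendsto (fun t : ℝ => (4 / 3 : ℝ) ^ (⌊t⌋₊ + 1)) atTop atTop :=
    (tendsto_pow_atTop_atTop_of_one_lt (by norm_num)).comp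
      ((tendsto_add_atTop_nat 1).comp tendsto_nat_floor_atTop)
  refine tendsto_atTop_mono' _ ?_ hpow
  filter_upwards [eventually_gt_atTop 0] with t ht
  calc (4 / 3 : ℝ) ^ (⌊t⌋₊ + 1) = ∏ _j ∈ range (⌊t⌋₊ + 1), (4 / 3 : ℝ) := by
        rw [prod_const, card_range]
    _ ≤ kurtosisPartialProd t ⌊t⌋₊ := prod_le_prod (fun _ _ => by norm_num) fun j hj =>
        four_thirds_le_kurtosisFactor ht <|
          (Nat.cast_le.2 (Nat.lt_succ_iff.1 (mem_range.1 hj))).trans (Nat.floor_le ht.le)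
    _ ≤ kurtosisRatio t := kurtosisPartialProd_le_kurtosisRatio ht _

lemma continuousAt_kurtosisRatio (ht : 0 < t) : ContinuousAt kurtosisRatio t := by
  have hΓ : ∀ x : ℝ, 0 < x → ContinuousAt Gamma x := fun x hx =>
    (differentiableAt_Gamma fun m h => by
      linarith [h ▸ hx, m.cast_nonneg (α := ℝ)]).continuousAt
  have h5 := (hΓ _ (by positivity : 0 < 5 * t)).comp (continuousAt_id.const_mul 5)
  have h3 := (hΓ _ (by positivity : 0 < 3 * t)).comp (continuousAt_id.const_mul 3)
  exact (h5.mul (hΓ t ht)).div (h3.pow 2) (pow_ne_zero _ (Gamma_pos_of_pos (by positivity)).ne')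

lemma kurtosisRatio_one_half : kurtosisRatio (1 / 2) = 3 := by
  have h := (Gamma_pos_of_pos (by norm_num : (0 : ℝ) < 1 / 2)).ne'
  have h32 : Gamma (3 / 2) = 1 / 2 * Gamma (1 / 2) := by
    rw [show (3 / 2 : ℝ) = 1 / 2 + 1 by norm_num, Gamma_add_one (by norm_num)]
  have h52 : Gamma (5 / 2) = 3 / 2 * Gamma (3 / 2) := by
    rw [show (5 / 2 : ℝ) = 3 / 2 + 1 by norm_num, Gamma_add_one (by norm_num)]
  rw [kurtosisRatio, show 5 * (1 / 2 : ℝ) = 5 / 2 by norm_num,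
    show 3 * (1 / 2 : ℝ) = 3 / 2 by norm_num, h52, h32]
  field_simp

end GeneralizedLaplace

open GeneralizedLaplace

/-- The excess kurtosis `Γ(5/α)Γ(1/α)/Γ(3/α)² − 3` of the generalized Laplace distribution
is strictly decreasing in `α` on `(0, 2)`, tends to `+∞` as `α → 0⁺`, and tends to `0`
as `α → 2⁻`. -/
theorem generalized_laplace_kurtosis_monotone :
    StrictAntiOn
      (fun α : ℝ => Real.Gamma (5 / α) * Real.Gamma (1 / α) / (Real.Gamma (3 / α)) ^ 2 - 3)
      (Set.Ioo 0 2) ∧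
    Tendsto (fun α : ℝ => Real.Gamma (5 / α) * Real.Gamma (1 / α) / (Real.Gamma (3 / α)) ^ 2 - 3)
      (nhdsWithin 0 (Set.Ioi 0)) atTop ∧
    Tendsto (fun α : ℝ => Real.Gamma (5 / α) * Real.Gamma (1 / α) / (Real.Gamma (3 / α)) ^ 2 - 3)
      (nhdsWithin 2 (Set.Iio 2)) (nhds 0) := by
  have hfun : (fun α : ℝ => Gamma (5 / α) * Gamma (1 / α) / Gamma (3 / α) ^ 2 - 3) =
      fun α => kurtosisRatio α⁻¹ - 3 := by
    funext α
    simp only [kurtosisRatio, div_eq_mul_inv, one_mul]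
  rw [hfun]
  refine ⟨?_, ?_, ?_⟩
  · have := strictMonoOn_kurtosisRatio.comp_strictAntiOn strictAntiOn_inv_pos
      fun α (hα : 0 < α) => inv_pos.2 hα
    exact fun a ha b hb hab => sub_lt_sub_right (this ha.1 hb.1 hab) 3
  · exact tendsto_atTop_add_const_right _ (-3)
      (tendsto_kurtosisRatio_atTop.comp tendsto_inv_nhdsGT_zero)
  · have hcont : ContinuousAt (fun α : ℝ => kurtosisRatio α⁻¹ - 3) 2 :=
      ((continuousAt_kurtosisRatio (by norm_num)).comp (continuousAt_inv₀ two_ne_zero)).sub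
        continuousAt_const
    have hval : kurtosisRatio (2 : ℝ)⁻¹ - 3 = 0 := by
      rw [← one_div, kurtosisRatio_one_half, sub_self]
    exact hval ▸ hcont.tendsto.mono_left nhdsWithin_le_nhds
end
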